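/- Let K be a field and f : M₁ → M₂ a linear map of finite-dimensional K-vector spaces. The subspace Λ_f = {((x, η ∘ f), (f(x), η)) : x ∈ M₁, η ∈ Dual(M₂)} of (M₁ × Dual(M₁)) × (M₂ × Dual(M₂)) is isotropic for the bilinear form Ω given by Ω((a, b), (a', b')) = −ω₁(a, a') + ω₂(b, b') (where ωᵢ is the canonical symplectic pairing on Mᵢ × Dual(Mᵢ)), and dim Λ_f = dim M₁ + dim M₂, i.e. half the dimension of the ambient space. -/
import Mathlib

/-- Let `K` be a field and `f : M₁ → M₂` a linear map of
finite-dimensional `K`-vector spaces. The subspace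
`Λ_f = {((x, η ∘ f), (f x, η)) : x ∈ M₁, η ∈ Dual(M₂)}` of
`(M₁ × Dual M₁) × (M₂ × Dual M₂)` is isotropic for the bilinear form
`Ω((a,b),(a',b')) = −ω₁(a,a') + ω₂(b,b')`, where `ωᵢ` is the canonical symplectic
pairing `ωᵢ((v,φ),(v',φ')) = φ'(v) − φ(v')` on `Mᵢ × Dual Mᵢ`, and
`dim Λ_f = dim M₁ + dim M₂`, i.e. half the dimension of the ambient space. -/
theorem lagrangian_correspondence_isotropic_and_finrank
    (K : Type*) [Field K]
    (M₁ : Type*) [AddCommGroup M₁] [Module K M₁] [FiniteDimensional K M₁]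
    (M₂ : Type*) [AddCommGroup M₂] [Module K M₂] [FiniteDimensional K M₂]
    (f : M₁ →ₗ[K] M₂)
    (Λ : Submodule K ((M₁ × Module.Dual K M₁) × (M₂ × Module.Dual K M₂)))
    (hΛ : ∀ p, p ∈ Λ ↔ ∃ x : M₁, ∃ η : Module.Dual K M₂,
      p = ((x, η.comp f), (f x, η))) :
    (∀ p ∈ Λ, ∀ q ∈ Λ,
      -(q.1.2 p.1.1 - p.1.2 q.1.1) + (q.2.2 p.2.1 - p.2.2 q.2.1) = 0) ∧
    Module.finrank K Λ = Module.finrank K M₁ + Module.finrank K M₂ := by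
  constructor
  · rintro p hp q hq
    obtain ⟨x, η, rfl⟩ := (hΛ p).mp hp
    obtain ⟨x', η', rfl⟩ := (hΛ q).mp hq
    simp
  · set g : (M₁ × Module.Dual K M₂) →ₗ[K]
        ((M₁ × Module.Dual K M₁) × (M₂ × Module.Dual K M₂)) :=
      { toFun := fun q => ((q.1, q.2.comp f), (f q.1, q.2))
        map_add' := by intro a b; ext <;> simp
        map_smul' := by intro c a; ext <;> simp } with hg
    have hrange : Λ = LinearMap.range g := by
      ext p
      rw [hΛ]
      constructor
      · rintro ⟨x, η, rfl⟩; exact ⟨(x, η), rfl⟩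
      · rintro ⟨⟨x, η⟩, rfl⟩; exact ⟨x, η, rfl⟩
    have hinj : Function.Injective g := by
      intro a b hab
      have h1 : a.1 = b.1 := congrArg (fun p => p.1.1) hab
      have h2 : a.2 = b.2 := congrArg (fun p => p.2.2) hab
      exact Prod.ext h1 h2
    rw [hrange, LinearMap.finrank_range_of_inj hinj, Module.finrank_prod,
      Subspace.dual_finrank_eq]
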